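/- arXiv:2405.03948 — 2 statements merged into one kernel-verified Lean document; each statement's English description precedes it below -/
import Mathlib

section
/- Fix V ≥ 0 and δ ∈ [0,1). For p ∈ (0,1) define ρ₁(p) = e^{(1-p)/p}/(1 + e^{V} + e^{(1-p)/p}), ρ₂ = e^{-1}/(1 + e^{V} + e^{-1}), and c(p) = ln((1-ρ₂)/(1-ρ₁(p))) / ( ln(ρ₁(p)/ρ₂) + ln((1-ρ₂)/(1-ρ₁(p))) ). For ρ, x ∈ (0,1), let (X_k)_{k ≥ 1} be i.i.d. random variables taking value 1-x with probability ρ and -x with probability 1-ρ (realized on the countable product measure), let N(ρ,x) = sInf{ n ≥ 1 : Σ_{k=1}^{n} X_k < 0 }, and define g(δ, ρ, x) = E[1 - δ^{N(ρ,x)}], with the convention δ^{∞} = 0. Then g(δ, ρ₂, c(p)) → (1-δ)/(1 - δρ₂) as p → 0⁺. -/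
open MeasureTheory Real Filter Topology

/-- The `k`-th step of the random walk: `1 - x` on success (`ω k = true`), `-x` on failure. -/
noncomputable def walkStep (x : ℝ) (ω : ℕ → Bool) (k : ℕ) : ℝ :=
  if ω k then 1 - x else -x

/-- `N(x)(ω) = inf { n ≥ 1 : ∑_{k=1}^n X_k(ω) < 0 }`, the first time the partial sums of
the walk with steps in `{1-x, -x}` go strictly below zero (`⊤` if this never happens). -/
noncomputable def hitTime (x : ℝ) (ω : ℕ → Bool) : ℕ∞ :=
  sInf {m : ℕ∞ | ∃ n : ℕ, m = (n : ℕ∞) ∧ 1 ≤ n ∧ ∑ k ∈ Finset.Icc 1 n, walkStep x ω k < 0}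

/-- `δ^t` for an extended natural number `t`, with the convention `δ^∞ = 0`. -/
noncomputable def discPow (δ : ℝ) (t : ℕ∞) : ℝ :=
  if t = ⊤ then 0 else δ ^ t.toNat

/-- `ρ₁(p) = e^{(1-p)/p} / (1 + e^V + e^{(1-p)/p})`. -/
noncomputable def nicheRho1 (V p : ℝ) : ℝ :=
  Real.exp ((1 - p) / p) / (1 + Real.exp V + Real.exp ((1 - p) / p))

/-- `ρ₂ = e^{-1} / (1 + e^V + e^{-1})`. -/
noncomputable def nicheRho2 (V : ℝ) : ℝ :=
  Real.exp (-1) / (1 + Real.exp V + Real.exp (-1))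

/-- `c(p) = ln((1-ρ₂)/(1-ρ₁(p))) / ( ln(ρ₁(p)/ρ₂) + ln((1-ρ₂)/(1-ρ₁(p))) )`. -/
noncomputable def thresholdC (V p : ℝ) : ℝ :=
  Real.log ((1 - nicheRho2 V) / (1 - nicheRho1 V p))
    / (Real.log (nicheRho1 V p / nicheRho2 V)
        + Real.log ((1 - nicheRho2 V) / (1 - nicheRho1 V p)))

def hitSet (x : ℝ) (ω : ℕ → Bool) : Set ℕ :=
  {n : ℕ | 1 ≤ n ∧ ∑ k ∈ Finset.Icc 1 n, walkStep x ω k < 0}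

lemma hitTime_eq_top (x : ℝ) (ω : ℕ → Bool) (h : ¬(hitSet x ω).Nonempty) : hitTime x ω = ⊤ := by
  unfold hitTime
  have : {m : ℕ∞ | ∃ n : ℕ, m = (n : ℕ∞) ∧ 1 ≤ n ∧ ∑ k ∈ Finset.Icc 1 n, walkStep x ω k < 0} = ∅ := by
    ext m
    simp only [Set.mem_setOf_eq, Set.mem_empty_iff_false, iff_false, not_exists]
    rintro n ⟨rfl, h1, h2⟩
    exact h ⟨n, h1, h2⟩
  rw [this]
  exact sInf_empty

lemma hitTime_eq_sInf (x : ℝ) (ω : ℕ → Bool) (h : (hitSet x ω).Nonempty) :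
    hitTime x ω = ((sInf (hitSet x ω) : ℕ) : ℕ∞) := by
  unfold hitTime
  apply le_antisymm
  · exact sInf_le ⟨sInf (hitSet x ω), rfl, (Nat.sInf_mem h).1, (Nat.sInf_mem h).2⟩
  · apply le_sInf
    rintro m ⟨n, rfl, h1, h2⟩
    exact_mod_cast Nat.sInf_le (show n ∈ hitSet x ω from ⟨h1, h2⟩)

lemma hitTime_eq_coe_iff (x : ℝ) (ω : ℕ → Bool) (n : ℕ) :
    hitTime x ω = (n : ℕ∞) ↔ n ∈ hitSet x ω ∧ ∀ k < n, k ∉ hitSet x ω := by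
  by_cases h : (hitSet x ω).Nonempty
  · rw [hitTime_eq_sInf x ω h, Nat.cast_inj]
    constructor
    · rintro rfl
      exact ⟨Nat.sInf_mem h, fun k hk => Nat.notMem_of_lt_sInf hk⟩
    · rintro ⟨h1, h2⟩
      refine le_antisymm (Nat.sInf_le h1) ?_
      by_contra hlt
      exact h2 _ (lt_of_not_ge hlt) (Nat.sInf_mem h)
  · rw [hitTime_eq_top x ω h]
    constructor
    · intro ht; exact absurd ht.symm (ENat.coe_ne_top n)
    · rintro ⟨h1, -⟩; exact absurd ⟨n, h1⟩ h

lemma hitTime_eq_top_iff (x : ℝ) (ω : ℕ → Bool) :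
    hitTime x ω = ⊤ ↔ ∀ n, n ∉ hitSet x ω := by
  constructor
  · intro ht n hn
    by_cases h : (hitSet x ω).Nonempty
    · rw [hitTime_eq_sInf x ω h] at ht
      exact (ENat.coe_ne_top _) ht
    · exact h ⟨n, hn⟩
  · intro h
    exact hitTime_eq_top x ω (fun ⟨n, hn⟩ => h n hn)

lemma measurable_walkSum (x : ℝ) (n : ℕ) :
    Measurable fun ω : ℕ → Bool => ∑ k ∈ Finset.Icc 1 n, walkStep x ω k := by
  apply Finset.measurable_sum
  intro k _
  have hb : Measurable fun b : Bool => if b then 1 - x else -x := fun _ _ => trivial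
  exact hb.comp (measurable_pi_apply k)

lemma measurable_mem_hitSet (x : ℝ) (n : ℕ) :
    MeasurableSet {ω : ℕ → Bool | n ∈ hitSet x ω} := by
  have : {ω : ℕ → Bool | n ∈ hitSet x ω}
      = {ω : ℕ → Bool | 1 ≤ n} ∩ {ω | ∑ k ∈ Finset.Icc 1 n, walkStep x ω k < 0} := rfl
  rw [this]
  by_cases h1 : 1 ≤ n
  · simp only [h1, Set.setOf_true, Set.univ_inter]
    exact measurable_walkSum x n measurableSet_Iio
  · simp [h1]

lemma measurable_hitTime (x : ℝ) : Measurable (hitTime x) := by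
  apply measurable_to_countable'
  intro y
  induction y using ENat.recTopCoe with
  | top =>
    have : hitTime x ⁻¹' {⊤} = ⋂ n : ℕ, {ω : ℕ → Bool | n ∈ hitSet x ω}ᶜ := by
      ext ω
      simp [hitTime_eq_top_iff]
    rw [this]
    exact MeasurableSet.iInter fun n => (measurable_mem_hitSet x n).compl
  | coe n =>
    have : hitTime x ⁻¹' {(n : ℕ∞)}
        = {ω : ℕ → Bool | n ∈ hitSet x ω}
          ∩ ⋂ k : ℕ, ⋂ _ : k < n, {ω : ℕ → Bool | k ∈ hitSet x ω}ᶜ := by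
      ext ω
      simp [hitTime_eq_coe_iff]
    rw [this]
    exact (measurable_mem_hitSet x n).inter
      (MeasurableSet.iInter fun k => MeasurableSet.iInter fun _ => (measurable_mem_hitSet x k).compl)

def cyl (n : ℕ) : Set (ℕ → Bool) :=
  {ω | ∀ i ∈ Finset.Icc 1 n, ω i = decide (i < n)}

lemma measurableSet_cyl (n : ℕ) : MeasurableSet (cyl n) := by
  have : cyl n = ⋂ i ∈ (Finset.Icc 1 n : Finset ℕ), (fun ω : ℕ → Bool => ω i) ⁻¹' {decide (i < n)} := by
    ext ω
    simp [cyl, Set.mem_iInter]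
  rw [this]
  exact MeasurableSet.biInter (Set.to_countable _)
    (fun i _ => measurable_pi_apply i (measurableSet_singleton _))

lemma sum_walk_of_true (x : ℝ) (ω : ℕ → Bool) (j : ℕ)
    (h : ∀ k, 1 ≤ k → k ≤ j → ω k = true) :
    ∑ k ∈ Finset.Icc 1 j, walkStep x ω k = j * (1 - x) := by
  have heq : ∀ k ∈ Finset.Icc 1 j, walkStep x ω k = 1 - x := by
    intro k hk
    rw [Finset.mem_Icc] at hk
    simp [walkStep, h k hk.1 hk.2]
  rw [Finset.sum_congr rfl heq, Finset.sum_const, Nat.card_Icc]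
  simp [nsmul_eq_mul]

lemma sum_walk_lt_zero (x : ℝ) (ω : ℕ → Bool) (m n : ℕ) (hm : 1 ≤ m)
    (hx1 : 1 - 1/(m:ℝ) < x) (hn1 : 1 ≤ n) (hnm : n ≤ m)
    (htrue : ∀ k, 1 ≤ k → k < n → ω k = true) (hfalse : ω n = false) :
    ∑ k ∈ Finset.Icc 1 n, walkStep x ω k < 0 := by
  obtain ⟨j, rfl⟩ : ∃ j, n = j + 1 := ⟨n - 1, (Nat.succ_pred_eq_of_pos hn1).symm⟩
  rw [Finset.sum_Icc_succ_top (by omega)]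
  rw [sum_walk_of_true x ω j (fun k hk1 hk2 => htrue k hk1 (by omega))]
  have hstep : walkStep x ω (j + 1) = -x := by simp [walkStep, hfalse]
  rw [hstep]
  have hmpos : (0:ℝ) < m := by exact_mod_cast hm
  have hjm : ((j:ℝ) + 1) ≤ m := by exact_mod_cast hnm
  have h1 : ((j:ℝ) + 1) * (1 - 1/m) < ((j:ℝ) + 1) * x :=
    mul_lt_mul_of_pos_left hx1 (by positivity)
  have h3 : ((j:ℝ) + 1) / m ≤ 1 := by
    rw [div_le_one hmpos]; exact hjm
  have h2 : ((j:ℝ) + 1) * (1 - 1/m) = (j + 1) - ((j:ℝ)+1)/m := by ring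
  push_cast
  nlinarith

lemma discPow_nonneg {δ : ℝ} (hδ0 : 0 ≤ δ) (t : ℕ∞) : 0 ≤ discPow δ t := by
  unfold discPow; split
  · exact le_refl 0
  · positivity

lemma discPow_le_one {δ : ℝ} (hδ0 : 0 ≤ δ) (hδ1 : δ ≤ 1) (t : ℕ∞) : discPow δ t ≤ 1 := by
  unfold discPow; split
  · norm_num
  · exact pow_le_one₀ hδ0 hδ1

lemma discPow_coe (δ : ℝ) (n : ℕ) : discPow δ (n : ℕ∞) = δ ^ n := by
  simp [discPow]

lemma pointwise_bound {δ x : ℝ} {m : ℕ} (hδ0 : 0 ≤ δ) (hδ1 : δ < 1) (hm : 1 ≤ m)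
    (hx1 : 1 - 1/(m:ℝ) < x) (hx2 : x < 1) (ω : ℕ → Bool) :
    |discPow δ (hitTime x ω) - ∑ j ∈ Finset.Icc 1 m, Set.indicator (cyl j) (fun _ => δ^j) ω|
      ≤ δ^m := by
  by_cases hex : ∃ k, 1 ≤ k ∧ k ≤ m ∧ ω k = false
  · obtain ⟨k₀, hk1, hkm, hkf⟩ := hex
    have hSne : {k : ℕ | 1 ≤ k ∧ ω k = false}.Nonempty := ⟨k₀, hk1, hkf⟩
    set n := sInf {k : ℕ | 1 ≤ k ∧ ω k = false} with hn
    have hnS := Nat.sInf_mem hSne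
    have hn1 : 1 ≤ n := hnS.1
    have hnf : ω n = false := hnS.2
    have hnm : n ≤ m := le_trans (Nat.sInf_le (show k₀ ∈ {k : ℕ | 1 ≤ k ∧ ω k = false} from ⟨hk1, hkf⟩)) hkm
    have htrue : ∀ k, 1 ≤ k → k < n → ω k = true := by
      intro k hk1' hkn
      by_contra hc
      rw [Bool.not_eq_true] at hc
      exact absurd (Nat.sInf_le (show k ∈ {k : ℕ | 1 ≤ k ∧ ω k = false} from ⟨hk1', hc⟩)) (not_le.mpr hkn)
    have hhit : hitTime x ω = (n : ℕ∞) := by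
      rw [hitTime_eq_coe_iff]
      refine ⟨⟨hn1, sum_walk_lt_zero x ω m n hm hx1 hn1 hnm htrue hnf⟩, ?_⟩
      rintro k hkn ⟨hk1', hksum⟩
      rw [sum_walk_of_true x ω k (fun j hj1 hjk => htrue j hj1 (lt_of_le_of_lt hjk hkn))] at hksum
      have : (0:ℝ) ≤ (k:ℝ) * (1 - x) := by
        apply mul_nonneg (Nat.cast_nonneg k); linarith
      linarith
    have hsum : ∑ j ∈ Finset.Icc 1 m, Set.indicator (cyl j) (fun _ => δ^j) ω = δ^n := by
      rw [Finset.sum_eq_single_of_mem n (Finset.mem_Icc.mpr ⟨hn1, hnm⟩) ?_]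
      · apply Set.indicator_of_mem
        intro i hi
        rw [Finset.mem_Icc] at hi
        by_cases hin : i < n
        · rw [htrue i hi.1 hin, decide_eq_true hin]
        · have : i = n := le_antisymm hi.2 (not_lt.mp hin)
          subst this
          rw [hnf, decide_eq_false hin]
      · intro j hj hjne
        apply Set.indicator_of_notMem
        intro hcyl
        rw [Finset.mem_Icc] at hj
        rcases lt_or_gt_of_ne hjne with hlt | hgt
        · have h1 := hcyl j (Finset.mem_Icc.mpr ⟨hj.1, le_refl j⟩)
          rw [htrue j hj.1 hlt, decide_eq_false (lt_irrefl j)] at h1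
          simp at h1
        · have h1 := hcyl n (Finset.mem_Icc.mpr ⟨hn1, le_of_lt hgt⟩)
          rw [hnf, decide_eq_true hgt] at h1
          simp at h1
    rw [hhit, discPow_coe, hsum, sub_self, abs_zero]
    positivity
  · push_neg at hex
    have htrue : ∀ k, 1 ≤ k → k ≤ m → ω k = true := by
      intro k h1 h2
      have := hex k h1 h2
      revert this
      cases ω k <;> simp
    have hs0 : ∑ j ∈ Finset.Icc 1 m, Set.indicator (cyl j) (fun _ => δ^j) ω = 0 := by
      apply Finset.sum_eq_zero
      intro j hj
      rw [Finset.mem_Icc] at hj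
      apply Set.indicator_of_notMem
      intro hcyl
      have h1 := hcyl j (Finset.mem_Icc.mpr ⟨hj.1, le_refl j⟩)
      rw [htrue j hj.1 hj.2, decide_eq_false (lt_irrefl j)] at h1
      simp at h1
    rw [hs0, sub_zero, abs_of_nonneg (discPow_nonneg hδ0 _)]
    by_cases hne : (hitSet x ω).Nonempty
    · rw [hitTime_eq_sInf x ω hne, discPow_coe]
      have hmem := Nat.sInf_mem hne
      obtain ⟨h01, h0sum⟩ := hmem
      have hgt : m < sInf (hitSet x ω) := by
        by_contra hle
        rw [not_lt] at hle
        rw [sum_walk_of_true x ω _ (fun k hk1 hk2 => htrue k hk1 (le_trans hk2 hle))] at h0sum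
        have : (0:ℝ) ≤ ((sInf (hitSet x ω) : ℕ) : ℝ) * (1 - x) := by
          apply mul_nonneg (Nat.cast_nonneg _); linarith
        linarith
      exact pow_le_pow_of_le_one hδ0 hδ1.le hgt.le
    · rw [hitTime_eq_top x ω hne]
      simp only [discPow, if_pos rfl]
      positivity

lemma cyl_toReal {ρ : ℝ} (hρ0 : 0 ≤ ρ) (hρ1 : ρ ≤ 1) (ν : Measure (ℕ → Bool)) {n : ℕ}
    (hn1 : 1 ≤ n)
    (hν : ν (cyl n) = ∏ i ∈ Finset.Icc 1 n,
      (if decide (i < n) then ENNReal.ofReal ρ else ENNReal.ofReal (1 - ρ))) :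
    (ν (cyl n)).toReal = ρ^(n-1) * (1-ρ) := by
  rw [hν, ENNReal.toReal_prod]
  have hterm : ∀ i ∈ Finset.Icc 1 n,
      ((if decide (i < n) then ENNReal.ofReal ρ else ENNReal.ofReal (1 - ρ))).toReal
        = if i < n then ρ else 1 - ρ := by
    intro i _
    by_cases h : i < n <;> simp [h, ENNReal.toReal_ofReal, hρ0, show (0:ℝ) ≤ 1 - ρ by linarith]
  rw [Finset.prod_congr rfl hterm,
    ← Finset.prod_erase_mul _ _ (Finset.mem_Icc.mpr ⟨hn1, le_refl n⟩)]
  have h1 : ∀ i ∈ (Finset.Icc 1 n).erase n, (if i < n then ρ else 1 - ρ) = ρ := by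
    intro i hi
    rw [Finset.mem_erase, Finset.mem_Icc] at hi
    rw [if_pos (lt_of_le_of_ne hi.2.2 hi.1)]
  rw [Finset.prod_congr rfl h1, Finset.prod_const, Finset.card_erase_of_mem
    (Finset.mem_Icc.mpr ⟨hn1, le_refl n⟩), Nat.card_Icc, if_neg (lt_irrefl n)]
  have : n + 1 - 1 - 1 = n - 1 := by omega
  rw [this]

lemma series_est {δ ρ : ℝ} (hδ0 : 0 ≤ δ) (hδ1 : δ < 1) (hρ0 : 0 < ρ) (hρ1 : ρ < 1) (m : ℕ) :
    |(∑ j ∈ Finset.Icc 1 m, ρ^(j-1) * (1-ρ) * δ^j) - δ*(1-ρ)/(1-δ*ρ)| ≤ δ^m := by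
  have hδρ : δ*ρ < 1 := by nlinarith
  have hpos : (0:ℝ) < 1 - δ*ρ := by linarith
  have hS : ∑ j ∈ Finset.Icc 1 m, ρ^(j-1) * (1-ρ) * δ^j
      = δ*(1-ρ) * ∑ i ∈ Finset.range m, (δ*ρ)^i := by
    rw [show Finset.Icc 1 m = Finset.Ico 1 (m+1) from by rw [Finset.Ico_add_one_right_eq_Icc],
      Finset.sum_Ico_eq_sum_range, Finset.mul_sum]
    apply Finset.sum_congr (by congr 1)
    intro i _
    have : 1 + i - 1 = i := by omega
    rw [this]
    rw [pow_add, pow_one, mul_pow]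
    ring
  rw [hS, geom_sum_eq (ne_of_lt hδρ)]
  have key : δ*(1-ρ) * (((δ*ρ)^m - 1)/(δ*ρ-1)) - δ*(1-ρ)/(1-δ*ρ)
      = -(δ*(1-ρ)*(δ*ρ)^m/(1-δ*ρ)) := by
    have hne1 : δ*ρ - 1 ≠ 0 := by linarith
    have hne2 : 1 - δ*ρ ≠ 0 := by linarith
    field_simp
    ring
  rw [key, abs_neg]
  have hnn : (0:ℝ) ≤ δ*(1-ρ)*(δ*ρ)^m/(1-δ*ρ) := by
    apply div_nonneg _ hpos.le
    exact mul_nonneg (mul_nonneg hδ0 (by linarith)) (pow_nonneg (by positivity) m)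
  rw [abs_of_nonneg hnn, div_le_iff₀ hpos]
  have h1 : (δ*ρ)^m = δ^m * ρ^m := mul_pow δ ρ m
  have h2 : ρ^m ≤ 1 := pow_le_one₀ hρ0.le hρ1.le
  have h3 : (0:ℝ) ≤ δ^m := pow_nonneg hδ0 m
  have h4 : (0:ℝ) ≤ ρ^m := pow_nonneg hρ0.le m
  have h5 : δ*(1-ρ) ≤ 1 - δ*ρ := by nlinarith
  have h6 : δ*(1-ρ)*ρ^m ≤ δ*(1-ρ) := by nlinarith [mul_nonneg (mul_nonneg hδ0 (show (0:ℝ) ≤ 1-ρ by linarith)) (show (0:ℝ) ≤ 1 - ρ^m by linarith)]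
  calc δ*(1-ρ)*(δ*ρ)^m = (δ*(1-ρ)*ρ^m)*δ^m := by rw [h1]; ring
    _ ≤ (1-δ*ρ)*δ^m := mul_le_mul_of_nonneg_right (le_trans h6 h5) h3
    _ = δ^m*(1-δ*ρ) := by ring

lemma integral_est {δ ρ x : ℝ} {m : ℕ} (hδ0 : 0 ≤ δ) (hδ1 : δ < 1) (hρ0 : 0 < ρ) (hρ1 : ρ < 1)
    (hm : 1 ≤ m) (hx1 : 1 - 1/(m:ℝ) < x) (hx2 : x < 1)
    (ν : Measure (ℕ → Bool)) [IsProbabilityMeasure ν]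
    (hcyl : ∀ n : ℕ, 1 ≤ n → (ν (cyl n)).toReal = ρ^(n-1) * (1-ρ)) :
    |(∫ ω, (1 - discPow δ (hitTime x ω)) ∂ν) - (1-δ)/(1-δ*ρ)| ≤ 2 * δ^m := by
  have hδρ : δ*ρ < 1 := by nlinarith
  have hpos : (0:ℝ) < 1 - δ*ρ := by linarith
  set f₀ : (ℕ → Bool) → ℝ := fun ω => discPow δ (hitTime x ω) with hf₀
  have hd : Measurable (discPow δ) := fun _ _ => trivial
  have hmeas : Measurable f₀ := hd.comp (measurable_hitTime x)
  have hint : Integrable f₀ ν := by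
    refine (integrable_const (1:ℝ)).mono' hmeas.aestronglyMeasurable (ae_of_all _ fun ω => ?_)
    rw [Real.norm_eq_abs, abs_of_nonneg (discPow_nonneg hδ0 _)]
    exact discPow_le_one hδ0 hδ1.le _
  set sf : (ℕ → Bool) → ℝ := fun ω => ∑ j ∈ Finset.Icc 1 m, Set.indicator (cyl j) (fun _ => δ^j) ω
    with hsf
  have hintS : Integrable sf ν :=
    integrable_finset_sum _ fun j _ => (integrable_const _).indicator (measurableSet_cyl j)
  have h1 : ∫ ω, (1 - f₀ ω) ∂ν = 1 - ∫ ω, f₀ ω ∂ν := by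
    rw [integral_sub (integrable_const 1) hint, integral_const]
    simp
  set S : ℝ := ∑ j ∈ Finset.Icc 1 m, ρ^(j-1) * (1-ρ) * δ^j with hSdef
  have hIS : ∫ ω, sf ω ∂ν = S := by
    rw [hsf]
    rw [integral_finset_sum _ fun j _ => (integrable_const _).indicator (measurableSet_cyl j)]
    apply Finset.sum_congr rfl
    intro j hj
    rw [Finset.mem_Icc] at hj
    rw [integral_indicator_const _ (measurableSet_cyl j), measureReal_def, hcyl j hj.1, smul_eq_mul]
  have h2 : |(∫ ω, f₀ ω ∂ν) - S| ≤ δ^m := by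
    rw [← hIS, ← integral_sub hint hintS]
    have hb := norm_integral_le_of_norm_le_const (μ := ν) (C := δ^m)
      (ae_of_all _ fun ω => by
        rw [Real.norm_eq_abs]
        exact pointwise_bound hδ0 hδ1 hm hx1 hx2 ω)
    simpa [Real.norm_eq_abs] using hb
  have h3 : |S - δ*(1-ρ)/(1-δ*ρ)| ≤ δ^m := series_est hδ0 hδ1 hρ0 hρ1 m
  have htarget : (1-δ)/(1-δ*ρ) = 1 - δ*(1-ρ)/(1-δ*ρ) := by
    field_simp
    ring
  rw [h1, htarget]
  have : (1 - ∫ ω, f₀ ω ∂ν) - (1 - δ*(1-ρ)/(1-δ*ρ))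
      = (δ*(1-ρ)/(1-δ*ρ) - S) + (S - ∫ ω, f₀ ω ∂ν) := by ring
  rw [this]
  calc |(δ*(1-ρ)/(1-δ*ρ) - S) + (S - ∫ ω, f₀ ω ∂ν)|
      ≤ |δ*(1-ρ)/(1-δ*ρ) - S| + |S - ∫ ω, f₀ ω ∂ν| := abs_add_le _ _
    _ ≤ δ^m + δ^m := add_le_add (by rw [abs_sub_comm]; exact h3) (by rw [abs_sub_comm]; exact h2)
    _ = 2 * δ^m := by ring

lemma nicheRho2_mem (V : ℝ) : nicheRho2 V ∈ Set.Ioo (0:ℝ) 1 := by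
  have h1 := Real.exp_pos (-1:ℝ)
  have h2 := Real.exp_pos V
  constructor
  · apply div_pos h1; linarith
  · rw [nicheRho2, div_lt_one (by linarith)]; linarith

lemma nicheRho1_mem {V p : ℝ} (hp : 0 < p) : nicheRho1 V p ∈ Set.Ioo (0:ℝ) 1 := by
  have h1 := Real.exp_pos ((1-p)/p)
  have h2 := Real.exp_pos V
  constructor
  · apply div_pos h1; linarith
  · rw [nicheRho1, div_lt_one (by linarith)]; linarith

lemma nicheRho2_lt_rho1 {V p : ℝ} (hp : 0 < p) : nicheRho2 V < nicheRho1 V p := by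
  have h1 := Real.exp_pos ((1-p)/p)
  have h2 := Real.exp_pos V
  have h3 := Real.exp_pos (-1:ℝ)
  have ht : (-1:ℝ) < (1-p)/p := by
    rw [lt_div_iff₀ hp]; linarith
  have hE : Real.exp (-1) < Real.exp ((1-p)/p) := Real.exp_lt_exp.mpr ht
  rw [nicheRho2, nicheRho1, div_lt_div_iff₀ (by linarith) (by linarith)]
  nlinarith [mul_lt_mul_of_pos_right hE (show (0:ℝ) < 1 + Real.exp V by linarith)]

lemma logA_pos {V p : ℝ} (hp : 0 < p) : 0 < Real.log (nicheRho1 V p / nicheRho2 V) :=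
  Real.log_pos ((one_lt_div (nicheRho2_mem V).1).mpr (nicheRho2_lt_rho1 hp))

lemma logB_pos {V p : ℝ} (hp : 0 < p) :
    0 < Real.log ((1 - nicheRho2 V) / (1 - nicheRho1 V p)) := by
  apply Real.log_pos
  rw [one_lt_div (by linarith [(nicheRho1_mem (V := V) hp).2])]
  linarith [nicheRho2_lt_rho1 (V := V) hp]

lemma thresholdC_lt_one {V p : ℝ} (hp : 0 < p) : thresholdC V p < 1 := by
  have hA := logA_pos (V := V) hp
  have hB := logB_pos (V := V) hp
  rw [thresholdC, div_lt_one (by linarith)]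
  linarith

lemma tendsto_thresholdC (V : ℝ) : Tendsto (thresholdC V) (𝓝[>] (0:ℝ)) (𝓝 1) := by
  have hEV := Real.exp_pos V
  have hρ2 := nicheRho2_mem V
  have h1p : Tendsto (fun p : ℝ => (1-p)/p) (𝓝[>] (0:ℝ)) atTop := by
    have h := tendsto_atTop_add_const_right (𝓝[>] (0:ℝ)) (-1:ℝ) tendsto_inv_nhdsGT_zero
    apply h.congr'
    filter_upwards [self_mem_nhdsWithin] with p hp
    have hp' : p ≠ 0 := ne_of_gt hp
    field_simp
    ring
  have hE : Tendsto (fun p : ℝ => Real.exp ((1-p)/p)) (𝓝[>] (0:ℝ)) atTop :=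
    Real.tendsto_exp_atTop.comp h1p
  have honem : Tendsto (fun p : ℝ => 1 - nicheRho1 V p) (𝓝[>] (0:ℝ)) (𝓝 0) := by
    have hden : Tendsto (fun p : ℝ => 1 + Real.exp V + Real.exp ((1-p)/p)) (𝓝[>] (0:ℝ)) atTop :=
      tendsto_atTop_add_const_left _ _ hE
    have h := Tendsto.div_atTop (tendsto_const_nhds (x := (1 + Real.exp V : ℝ))) hden
    apply h.congr'
    filter_upwards [self_mem_nhdsWithin] with p _
    have hd : (0:ℝ) < 1 + Real.exp V + Real.exp ((1-p)/p) := by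
      have := Real.exp_pos ((1-p)/p); linarith
    rw [nicheRho1, eq_sub_iff_add_eq, ← add_div, div_self (ne_of_gt hd)]
  have honem' : Tendsto (fun p : ℝ => 1 - nicheRho1 V p) (𝓝[>] (0:ℝ)) (𝓝[>] 0) := by
    rw [tendsto_nhdsWithin_iff]
    refine ⟨honem, ?_⟩
    filter_upwards [self_mem_nhdsWithin] with p hp
    exact sub_pos.mpr (nicheRho1_mem hp).2
  have hρ1 : Tendsto (nicheRho1 V) (𝓝[>] (0:ℝ)) (𝓝 1) := by
    have h := (tendsto_const_nhds (x := (1:ℝ)) (f := 𝓝[>] (0:ℝ))).sub honem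
    simp only [sub_zero] at h
    apply h.congr
    intro p
    ring
  have hA : Tendsto (fun p : ℝ => Real.log (nicheRho1 V p / nicheRho2 V)) (𝓝[>] (0:ℝ))
      (𝓝 (Real.log (1 / nicheRho2 V))) := by
    have hq : Tendsto (fun p : ℝ => nicheRho1 V p / nicheRho2 V) (𝓝[>] (0:ℝ))
        (𝓝 (1 / nicheRho2 V)) := hρ1.div_const _
    exact (Real.continuousAt_log (one_div_ne_zero (ne_of_gt (nicheRho2_mem V).1))).tendsto.comp hq
  have hB : Tendsto (fun p : ℝ => Real.log ((1 - nicheRho2 V) / (1 - nicheRho1 V p)))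
      (𝓝[>] (0:ℝ)) atTop := by
    have hlog : Tendsto (fun p : ℝ => Real.log (1 - nicheRho1 V p)) (𝓝[>] (0:ℝ)) atBot :=
      tendsto_log_nhdsGT_zero.comp honem'
    have h := tendsto_atTop_add_const_left (𝓝[>] (0:ℝ)) (Real.log (1 - nicheRho2 V))
      (tendsto_neg_atBot_atTop.comp hlog)
    apply h.congr'
    filter_upwards [self_mem_nhdsWithin] with p hp
    have h1 : (1:ℝ) - nicheRho2 V ≠ 0 := by have := hρ2.2; intro h; linarith
    have h2 : (1:ℝ) - nicheRho1 V p ≠ 0 := by have := (nicheRho1_mem (V := V) hp).2; intro h; linarith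
    rw [Function.comp_apply, Real.log_div h1 h2]
    ring
  have hAB : Tendsto (fun p : ℝ => Real.log (nicheRho1 V p / nicheRho2 V)
      + Real.log ((1 - nicheRho2 V) / (1 - nicheRho1 V p))) (𝓝[>] (0:ℝ)) atTop :=
    hA.add_atTop hB
  have hfrac : Tendsto (fun p : ℝ => Real.log (nicheRho1 V p / nicheRho2 V)
      / (Real.log (nicheRho1 V p / nicheRho2 V)
        + Real.log ((1 - nicheRho2 V) / (1 - nicheRho1 V p)))) (𝓝[>] (0:ℝ)) (𝓝 0) :=
    hA.div_atTop hAB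
  have h := (tendsto_const_nhds (x := (1:ℝ)) (f := 𝓝[>] (0:ℝ))).sub hfrac
  simp only [sub_zero] at h
  apply h.congr'
  filter_upwards [hAB.eventually_gt_atTop 0, self_mem_nhdsWithin] with p hpos hp
  rw [thresholdC]
  set A := Real.log (nicheRho1 V p / nicheRho2 V)
  set B := Real.log ((1 - nicheRho2 V) / (1 - nicheRho1 V p))
  field_simp
  ring

/-- Lemma 2 of the paper, second limit: fix `V ≥ 0` and `δ ∈ [0,1)`. For `ρ ∈ (0,1)` let
`μ ρ` be the countable product of Bernoulli(ρ) measures (characterized by its cylinder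
probabilities), under which the steps `X_k` are i.i.d., equal to `1-x` with probability `ρ`
and `-x` with probability `1-ρ`; let `N(ρ,x)` be the first time the partial sums go below
zero and `g(δ,ρ,x) = E[1 - δ^{N(ρ,x)}]` (with `δ^∞ = 0`). Then
`g(δ, ρ₂, c(p)) → (1-δ)/(1 - δρ₂)` as `p → 0⁺`. -/
theorem g_rho2_limit (V δ : ℝ) (hV : 0 ≤ V) (hδ : δ ∈ Set.Ico (0 : ℝ) 1)
    (μ : ℝ → Measure (ℕ → Bool)) (hprob : ∀ r, IsProbabilityMeasure (μ r))
    (hμ : ∀ r ∈ Set.Ioo (0 : ℝ) 1, ∀ (s : Finset ℕ) (b : ℕ → Bool),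
      μ r {ω | ∀ i ∈ s, ω i = b i}
        = ∏ i ∈ s, (if b i then ENNReal.ofReal r else ENNReal.ofReal (1 - r))) :
    Tendsto
      (fun p : ℝ =>
        ∫ ω, (1 - discPow δ (hitTime (thresholdC V p) ω)) ∂(μ (nicheRho2 V)))
      (𝓝[>] (0 : ℝ)) (𝓝 ((1 - δ) / (1 - δ * nicheRho2 V))) := by
  have hρ := nicheRho2_mem V
  haveI := hprob (nicheRho2 V)
  have hcyl : ∀ n : ℕ, 1 ≤ n →
      ((μ (nicheRho2 V)) (cyl n)).toReal = (nicheRho2 V)^(n-1) * (1 - nicheRho2 V) := by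
    intro n hn1
    exact cyl_toReal hρ.1.le hρ.2.le _ hn1
      (hμ (nicheRho2 V) hρ (Finset.Icc 1 n) (fun i => decide (i < n)))
  rw [Metric.tendsto_nhds]
  intro ε hε
  obtain ⟨m₀, hm₀⟩ := exists_pow_lt_of_lt_one (show (0:ℝ) < ε/4 by linarith) hδ.2
  set m := m₀ + 1 with hmdef
  have hm1 : 1 ≤ m := Nat.le_add_left 1 m₀
  have hδm : δ^m ≤ δ^m₀ := pow_le_pow_of_le_one hδ.1 hδ.2.le (Nat.le_succ m₀)
  have hcev : ∀ᶠ p in 𝓝[>] (0:ℝ), 1 - 1/(m:ℝ) < thresholdC V p := by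
    apply (tendsto_thresholdC V).eventually (eventually_gt_nhds ?_)
    have h0 : (0:ℝ) < 1/(m:ℝ) := by positivity
    linarith
  filter_upwards [hcev, self_mem_nhdsWithin] with p hc1 hp
  rw [Real.dist_eq]
  have hest := integral_est hδ.1 hδ.2 hρ.1 hρ.2 hm1 hc1 (thresholdC_lt_one hp)
    (μ (nicheRho2 V)) hcyl
  calc |(∫ ω, (1 - discPow δ (hitTime (thresholdC V p) ω)) ∂(μ (nicheRho2 V)))
        - (1 - δ) / (1 - δ * nicheRho2 V)| ≤ 2 * δ^m := hest
    _ ≤ 2 * δ^m₀ := by linarith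
    _ < ε := by linarith
end

section
/- Fix V > -1 and δ ∈ [0,1), and set ρ = 1/(1 + e + e^{V+1}), β₂ = (e^{V} + e^{-1})/(1 + e^{V} + e^{-1}), λ = 2e^{V}/(1 + 2e^{V}), Ψ₂ = ln(1 + e^{-1} + e^{V}), and Λ = ln(1 + 2e^{V}). Then (i) (1/(1-δρ))·β₂ + (δ(1-ρ)/((1-δ)(1-δρ)))·λ < λ/(1-δ), and (ii) 1/(1-δ) + (1/(1-δρ))·Ψ₂ + (δ(1-ρ)/((1-δ)(1-δρ)))·Λ > Λ/(1-δ). -/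
/-!
Both policies collect one reward stream forever, PEAR after a transient phase in which it
collects a different per-step reward. The discounted gap to the stationary stream is therefore
the per-step gap divided by `1 - δρ`, so both inequalities reduce to per-step comparisons:
`β₂ < λ` because `t ↦ t / (1 + t)` is increasing and `e⁻¹ < e^V`, and `Λ < 1 + Ψ₂` because
`1 + 2e^V < e (1 + e⁻¹ + e^V)`.
-/

open Real

namespace PearApp

/-- Discounted value of collecting `x` per step during a transient phase that persists with
probability `ρ` at each step, and `y` per step forever after it ends; it solves
`v = x + δ (ρ v + (1 - ρ) y / (1 - δ))`. -/
noncomputable def twoPhaseValue (δ ρ x y : ℝ) : ℝ :=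
  1 / (1 - δ * ρ) * x + δ * (1 - ρ) / ((1 - δ) * (1 - δ * ρ)) * y

variable {δ ρ : ℝ}

lemma twoPhaseValue_sub_div_one_sub (hδ : δ ≠ 1) (hδρ : δ * ρ ≠ 1) (x y : ℝ) :
    twoPhaseValue δ ρ x y - y / (1 - δ) = (x - y) / (1 - δ * ρ) := by
  have h₁ : 1 - δ ≠ 0 := sub_ne_zero.2 (Ne.symm hδ)
  have h₂ : 1 - δ * ρ ≠ 0 := sub_ne_zero.2 (Ne.symm hδρ)
  unfold twoPhaseValue
  field_simp
  ring

lemma mul_lt_one_of_mem_Ico (hδ : δ ∈ Set.Ico (0 : ℝ) 1) (hρ : ρ ≤ 1) : δ * ρ < 1 :=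
  (mul_le_of_le_one_right hδ.1 hρ).trans_lt hδ.2

lemma twoPhaseValue_lt_div_one_sub (hδ : δ ∈ Set.Ico (0 : ℝ) 1) (hρ : ρ ≤ 1) {x y : ℝ}
    (hxy : x < y) : twoPhaseValue δ ρ x y < y / (1 - δ) := by
  have hδρ := mul_lt_one_of_mem_Ico hδ hρ
  have hgap := twoPhaseValue_sub_div_one_sub hδ.2.ne hδρ.ne x y
  have : (x - y) / (1 - δ * ρ) < 0 := div_neg_of_neg_of_pos (by linarith) (by linarith)
  linarith

lemma div_one_sub_lt_div_one_sub_add_twoPhaseValue (hδ : δ ∈ Set.Ico (0 : ℝ) 1) (hρ : ρ ≤ 1)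
    {c x y : ℝ} (hc : 0 ≤ c) (hxy : y < c + x) :
    y / (1 - δ) < c / (1 - δ) + twoPhaseValue δ ρ x y := by
  have hδρ := mul_lt_one_of_mem_Ico hδ hρ
  have hgap := twoPhaseValue_sub_div_one_sub hδ.2.ne hδρ.ne x y
  have hc' : c / (1 - δ * ρ) ≤ c / (1 - δ) :=
    div_le_div_of_nonneg_left hc (by linarith [hδ.2]) (by nlinarith [hδ.1])
  have : 0 < c / (1 - δ * ρ) + (x - y) / (1 - δ * ρ) := by
    rw [← add_div]
    exact div_pos (by linarith) (by linarith)
  linarith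

end PearApp

lemma div_one_add_self_lt_div_one_add_self {s t : ℝ} (hs : 0 ≤ s) (hst : s < t) :
    s / (1 + s) < t / (1 + t) := by
  rw [div_lt_div_iff₀ (by linarith) (by linarith)]
  linarith

lemma log_one_add_two_mul_lt_one_add_log {a : ℝ} (ha : 0 ≤ a) :
    log (1 + 2 * a) < 1 + log (1 + exp (-1) + a) := by
  have hexp : exp 1 * exp (-1) = 1 := by rw [← exp_add]; norm_num
  have hlt : 1 + 2 * a < exp 1 * (1 + exp (-1) + a) := by
    nlinarith [exp_one_gt_two]
  calc log (1 + 2 * a) < log (exp 1 * (1 + exp (-1) + a)) := log_lt_log (by linarith) hlt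
    _ = 1 + log (1 + exp (-1) + a) := by
      rw [log_mul (exp_pos 1).ne' (by positivity), log_exp]

open PearApp in
/-- Misalignment between engagement and utility (from Theorems 1 and 2 of the paper): for
`V > -1`, `δ ∈ [0,1)`, `ρ = 1/(1 + e + e^{V+1})`, `β₂ = (e^V + e^{-1})/(1 + e^V + e^{-1})`,
`λ = 2e^V/(1 + 2e^V)`, `Ψ₂ = ln(1 + e^{-1} + e^V)`, `Λ = ln(1 + 2e^V)`:
(i) `Eng(PEAR) < Eng(APP)` and (ii) `Util(PEAR) > Util(APP)` in the limit `p → 0`. -/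
theorem pear_app_misalignment (V δ : ℝ) (hV : -1 < V) (hδ : δ ∈ Set.Ico (0 : ℝ) 1)
    (ρ β₂ lam Ψ₂ Λ : ℝ)
    (hρ : ρ = 1 / (1 + Real.exp 1 + Real.exp (V + 1)))
    (hβ₂ : β₂ = (Real.exp V + Real.exp (-1)) / (1 + Real.exp V + Real.exp (-1)))
    (hlam : lam = 2 * Real.exp V / (1 + 2 * Real.exp V))
    (hΨ₂ : Ψ₂ = Real.log (1 + Real.exp (-1) + Real.exp V))
    (hΛ : Λ = Real.log (1 + 2 * Real.exp V)) :
    (1 / (1 - δ * ρ)) * β₂ + (δ * (1 - ρ) / ((1 - δ) * (1 - δ * ρ))) * lam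
        < lam / (1 - δ)
    ∧ 1 / (1 - δ) + (1 / (1 - δ * ρ)) * Ψ₂ + (δ * (1 - ρ) / ((1 - δ) * (1 - δ * ρ))) * Λ
        > Λ / (1 - δ) := by
  have hρ₁ : ρ ≤ 1 := hρ ▸ div_le_one_of_le₀ (by linarith [exp_pos 1, exp_pos (V + 1)])
    (by positivity)
  have hβ₂lam : β₂ < lam := by
    rw [hβ₂, hlam, add_assoc, two_mul]
    exact div_one_add_self_lt_div_one_add_self (by positivity)
      (by linarith [exp_lt_exp.2 hV])
  have hΛΨ₂ : Λ < 1 + Ψ₂ := hΛ ▸ hΨ₂ ▸ log_one_add_two_mul_lt_one_add_log (exp_pos V).le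
  rw [add_assoc]
  exact ⟨twoPhaseValue_lt_div_one_sub hδ hρ₁ hβ₂lam,
    div_one_sub_lt_div_one_sub_add_twoPhaseValue hδ hρ₁ zero_le_one hΛΨ₂⟩
end
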